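/- For 0 < p_0 < p_a < 1, n > 0, and 0 ≤ k ≤ n, the tail ratio is at least the pointwise likelihood ratio: τ_1(k, p_a, p_0, n) ≥ σ(k, p_a, p_0, n). -/

import Mathlib

open Finset

/-- BRAVO likelihood ratio. -/
noncomputable def sigmaRatio (k n : ℕ) (pa p0 : ℝ) : ℝ :=
  (pa ^ k * (1 - pa) ^ (n - k)) / (p0 ^ k * (1 - p0) ^ (n - k))

/-- Binomial pmf. -/
noncomputable def binPMF (n k : ℕ) (p : ℝ) : ℝ :=
  (n.choose k : ℝ) * p ^ k * (1 - p) ^ (n - k)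

/-- Upper tail of the binomial distribution. -/
noncomputable def binTail (k n : ℕ) (p : ℝ) : ℝ :=
  ∑ i ∈ Finset.Icc k n, binPMF n i p

/-- MINERVA/PROVIDENCE first-round tail ratio. -/
noncomputable def tau1 (k n : ℕ) (pa p0 : ℝ) : ℝ :=
  binTail k n pa / binTail k n p0

/-! The binomial likelihood ratio `binPMF n i pa / binPMF n i p0` equals
`(pa / p0) ^ i * ((1 - pa) / (1 - p0)) ^ (n - i)`, which is nondecreasing in `i` when `p0 ≤ pa`
(monotone likelihood ratio), and `sigmaRatio k n pa p0` is its value at `i = k`. Hence every term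
of the upper tail from `k` satisfies `binPMF n i pa ≥ sigmaRatio k n pa p0 * binPMF n i p0`, and
summing over `i ∈ [k, n]` gives `binTail k n pa ≥ sigmaRatio k n pa p0 * binTail k n p0`. -/

theorem pow_mul_pow_le_pow_mul_pow_of_mul_le {R : Type*} [CommSemiring R] [PartialOrder R]
    [IsOrderedRing R] {x y u v : R} (hx : 0 ≤ x) (hy : 0 ≤ y) (hu : 0 ≤ u) (hv : 0 ≤ v)
    (h : x * v ≤ u * y) (k m d : ℕ) :
    u ^ k * v ^ (m + d) * (x ^ (k + d) * y ^ m) ≤ u ^ (k + d) * v ^ m * (x ^ k * y ^ (m + d)) := by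
  calc u ^ k * v ^ (m + d) * (x ^ (k + d) * y ^ m)
      = (u * x) ^ k * (v * y) ^ m * (x * v) ^ d := by ring
    _ ≤ (u * x) ^ k * (v * y) ^ m * (u * y) ^ d := by gcongr
    _ = u ^ (k + d) * v ^ m * (x ^ k * y ^ (m + d)) := by ring

theorem binPMF_nonneg (n i : ℕ) {p : ℝ} (hp0 : 0 ≤ p) (hp1 : p ≤ 1) : 0 ≤ binPMF n i p := by
  have : 0 ≤ 1 - p := by linarith
  unfold binPMF
  positivity

theorem binPMF_pos {n i : ℕ} (hi : i ≤ n) {p : ℝ} (hp0 : 0 < p) (hp1 : p < 1) :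
    0 < binPMF n i p := by
  have : 0 < 1 - p := by linarith
  have : 0 < (n.choose i : ℝ) := by exact_mod_cast Nat.choose_pos hi
  unfold binPMF
  positivity

theorem binTail_pos {k n : ℕ} (hk : k ≤ n) {p : ℝ} (hp0 : 0 < p) (hp1 : p < 1) :
    0 < binTail k n p :=
  Finset.sum_pos' (fun i _ => binPMF_nonneg n i hp0.le hp1.le)
    ⟨k, Finset.mem_Icc.mpr ⟨le_rfl, hk⟩, binPMF_pos hk hp0 hp1⟩

section LikelihoodRatio

variable {p0 pa : ℝ}

theorem sigmaRatio_mul_binPMF_le (hp0 : 0 < p0) (hp01 : p0 < 1) (hle : p0 ≤ pa) (hpa1 : pa ≤ 1)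
    {k n i : ℕ} (hki : k ≤ i) (hin : i ≤ n) :
    sigmaRatio k n pa p0 * binPMF n i p0 ≤ binPMF n i pa := by
  obtain ⟨d, rfl⟩ := Nat.exists_eq_add_of_le hki
  have hnk : n - k = (n - (k + d)) + d := by omega
  have hden : 0 < p0 ^ k * (1 - p0) ^ (n - k) := by
    have : 0 < 1 - p0 := by linarith
    positivity
  have hcross : p0 * (1 - pa) ≤ pa * (1 - p0) := by nlinarith
  unfold sigmaRatio binPMF
  rw [div_mul_eq_mul_div, div_le_iff₀ hden, hnk]
  have key := pow_mul_pow_le_pow_mul_pow_of_mul_le hp0.le (by linarith) (hp0.trans_le hle).le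
    (by linarith) hcross k (n - (k + d)) d
  have hC : (0 : ℝ) ≤ n.choose (k + d) := Nat.cast_nonneg _
  calc pa ^ k * (1 - pa) ^ (n - (k + d) + d) *
        ((n.choose (k + d) : ℝ) * p0 ^ (k + d) * (1 - p0) ^ (n - (k + d)))
      = n.choose (k + d) * (pa ^ k * (1 - pa) ^ (n - (k + d) + d) *
          (p0 ^ (k + d) * (1 - p0) ^ (n - (k + d)))) := by ring
    _ ≤ n.choose (k + d) * (pa ^ (k + d) * (1 - pa) ^ (n - (k + d)) *
          (p0 ^ k * (1 - p0) ^ (n - (k + d) + d))) := mul_le_mul_of_nonneg_left key hC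
    _ = _ := by ring

theorem sigmaRatio_mul_binTail_le (hp0 : 0 < p0) (hp01 : p0 < 1) (hle : p0 ≤ pa)
    (hpa1 : pa ≤ 1) (k n : ℕ) :
    sigmaRatio k n pa p0 * binTail k n p0 ≤ binTail k n pa := by
  rw [binTail, binTail, Finset.mul_sum]
  refine Finset.sum_le_sum fun i hi => ?_
  obtain ⟨hki, hin⟩ := Finset.mem_Icc.mp hi
  exact sigmaRatio_mul_binPMF_le hp0 hp01 hle hpa1 hki hin

end LikelihoodRatio

theorem stmt_4_general (p0 pa : ℝ) (n k : ℕ) (h0 : 0 < p0) (h1 : p0 < pa) (h2 : pa < 1)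
    (hk : k ≤ n) :
    tau1 k n pa p0 ≥ sigmaRatio k n pa p0 := by
  have hp01 : p0 < 1 := h1.trans h2
  rw [tau1, ge_iff_le, le_div_iff₀ (binTail_pos hk h0 hp01)]
  exact sigmaRatio_mul_binTail_le h0 hp01 h1.le h2.le k n

theorem stmt_4 (p0 pa : ℝ) (n k : ℕ) (h0 : 0 < p0) (h1 : p0 < pa) (h2 : pa < 1)
    (hn : 0 < n) (hk : k ≤ n) :
    tau1 k n pa p0 ≥ sigmaRatio k n pa p0 :=
  stmt_4_general p0 pa n k h0 h1 h2 hk
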